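/- With the setup of the multi-layer residual network x_{k+1} = H_k x_k + G_kΦ(W_k x_k), y_k = W_k x_k, Φ entrywise slope-restricted in [α, β], define m_0 = ‖W_0‖ and recursively m_{k+1} = ‖W_{k+1}Ĥ_k⋯Ĥ_0‖ + ((β−α)/2)·∑_{j=0}^{k} ‖W_{k+1}Ĥ_k⋯Ĥ_{j+1}G_j‖·m_j. Then for each k, the map x_0 ↦ y_k is Lipschitz with constant m_k. -/

import Mathlib

open Matrix

/-- Spectral norm (ℓ₂ operator norm) of a matrix. -/
noncomputable def specNorm {p n : ℕ} (M : Matrix (Fin p) (Fin n) ℝ) : ℝ :=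
  ‖LinearMap.toContinuousLinearMap (Matrix.toEuclideanLin M)‖

/-- View a plain vector as an element of Euclidean space. -/
def eu {n : ℕ} (v : Fin n → ℝ) : EuclideanSpace ℝ (Fin n) := WithLp.toLp 2 v

/-- View an element of Euclidean space as a plain vector. -/
def pl {n : ℕ} (v : EuclideanSpace ℝ (Fin n)) : Fin n → ℝ := v

/-- `prodDown M k c = M k * M (k-1) * ⋯ * M (k-c+1)` (a product of `c` factors). -/
def prodDown {n : ℕ} (M : ℕ → Matrix (Fin n) (Fin n) ℝ) :
    ℕ → ℕ → Matrix (Fin n) (Fin n) ℝ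
  | _, 0 => 1
  | k, c + 1 => M k * prodDown M (k - 1) c

/-- The state sequence of the residual network `x_{k+1} = H_k x_k + G_k Φ(W_k x_k)`. -/
def netState {n : ℕ} (φ : ℝ → ℝ) (H G W : ℕ → Matrix (Fin n) (Fin n) ℝ)
    (x0 : Fin n → ℝ) : ℕ → Fin n → ℝ
  | 0 => x0
  | k + 1 => (H k).mulVec (netState φ H G W x0 k) +
      (G k).mulVec (fun i => φ ((W k).mulVec (netState φ H G W x0 k) i))

/-!
Put `Ψ = Φ - ((α + β) / 2) • id`; the slope restriction makes `Ψ` `((β - α) / 2)`-Lipschitz.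
Rewriting `Φ = Ψ + ((α + β) / 2) • id`, the difference `d_j` of two trajectories satisfies the
linear recursion `d_{j+1} = Ĥ_j d_j + G_j (Ψ y_j - Ψ y'_j)`, which unrolls to
`d_{k+1} = Ĥ_k ⋯ Ĥ_0 d_0 + ∑_{j ≤ k} Ĥ_k ⋯ Ĥ_{j+1} G_j (Ψ y_j - Ψ y'_j)`.
Applying `W_{k+1}`, the triangle inequality, the Lipschitz bound on `Ψ` and the bounds on
`‖y_j - y'_j‖` for `j ≤ k` (strong induction) produce exactly the recursion defining `m_{k+1}`.
-/

open Finset NNReal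

lemma specNorm_nonneg {p n : ℕ} (M : Matrix (Fin p) (Fin n) ℝ) : 0 ≤ specNorm M :=
  norm_nonneg _

lemma norm_eu_mulVec_le {p n : ℕ} (M : Matrix (Fin p) (Fin n) ℝ) (v : Fin n → ℝ) :
    ‖eu (M *ᵥ v)‖ ≤ specNorm M * ‖eu v‖ :=
  (LinearMap.toContinuousLinearMap (Matrix.toEuclideanLin M)).le_opNorm (eu v)

lemma norm_eu_mulVec_add_sum_le {ι : Type*} {p n q : ℕ} (A : Matrix (Fin p) (Fin n) ℝ)
    (B : ι → Matrix (Fin p) (Fin q) ℝ) (s : Finset ι) (v : Fin n → ℝ) (u : ι → Fin q → ℝ) :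
    ‖eu (A *ᵥ v + ∑ j ∈ s, B j *ᵥ u j)‖ ≤
      specNorm A * ‖eu v‖ + ∑ j ∈ s, specNorm (B j) * ‖eu (u j)‖ := by
  calc ‖eu (A *ᵥ v + ∑ j ∈ s, B j *ᵥ u j)‖
      = ‖eu (A *ᵥ v) + ∑ j ∈ s, eu (B j *ᵥ u j)‖ := by
        simp only [eu, WithLp.toLp_add, WithLp.toLp_sum]
    _ ≤ ‖eu (A *ᵥ v)‖ + ∑ j ∈ s, ‖eu (B j *ᵥ u j)‖ :=
        (norm_add_le _ _).trans (add_le_add_right (norm_sum_le _ _) _)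
    _ ≤ specNorm A * ‖eu v‖ + ∑ j ∈ s, specNorm (B j) * ‖eu (u j)‖ := by
        gcongr with j
        · exact norm_eu_mulVec_le A v
        · exact norm_eu_mulVec_le (B j) (u j)

lemma LipschitzWith.norm_toLp_comp_sub_comp_le {ι : Type*} [Fintype ι] {f : ℝ → ℝ} {K : ℝ≥0}
    (hf : LipschitzWith K f) (u v : ι → ℝ) :
    ‖WithLp.toLp 2 (f ∘ u - f ∘ v)‖ ≤ K * ‖WithLp.toLp 2 (u - v)‖ := by
  rw [EuclideanSpace.norm_eq, EuclideanSpace.norm_eq]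
  calc √(∑ i, ‖f (u i) - f (v i)‖ ^ 2) ≤ √(∑ i, (K * ‖u i - v i‖) ^ 2) := by
        gcongr with i
        exact hf.norm_sub_le _ _
    _ = √((K : ℝ) ^ 2 * ∑ i, ‖u i - v i‖ ^ 2) := by simp only [mul_pow, mul_sum]
    _ = K * √(∑ i, ‖u i - v i‖ ^ 2) := by
        rw [Real.sqrt_mul (sq_nonneg _), Real.sqrt_sq K.coe_nonneg]

lemma lipschitzWith_sub_mul_of_slope_mem_Icc {φ : ℝ → ℝ} {α β : ℝ}
    (hslope : ∀ a b : ℝ, a ≠ b → α ≤ (φ a - φ b) / (a - b) ∧ (φ a - φ b) / (a - b) ≤ β) :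
    LipschitzWith (Real.toNNReal ((β - α) / 2)) (fun a => φ a - (α + β) / 2 * a) := by
  refine LipschitzWith.of_dist_le' fun a b => ?_
  rcases eq_or_ne a b with rfl | hab
  · simp
  obtain ⟨hα, hβ⟩ := hslope a b hab
  have hab' : a - b ≠ 0 := sub_ne_zero.mpr hab
  have hdiff : φ a - (α + β) / 2 * a - (φ b - (α + β) / 2 * b) =
      ((φ a - φ b) / (a - b) - (α + β) / 2) * (a - b) := by
    field_simp; ring
  rw [Real.dist_eq, Real.dist_eq, hdiff, abs_mul]
  gcongr
  rw [abs_le]; constructor <;> linarith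

lemma prodDown_succ_succ {n : ℕ} (M : ℕ → Matrix (Fin n) (Fin n) ℝ) (k c : ℕ) :
    prodDown M (k + 1) (c + 1) = M (k + 1) * prodDown M k c := rfl

lemma eq_prodDown_mulVec_add_sum {n : ℕ} {M : ℕ → Matrix (Fin n) (Fin n) ℝ}
    {d u : ℕ → Fin n → ℝ} (h : ∀ j, d (j + 1) = M j *ᵥ d j + u j) (k : ℕ) :
    d (k + 1) = prodDown M k (k + 1) *ᵥ d 0 + ∑ j ∈ range (k + 1), prodDown M k (k - j) *ᵥ u j := by
  induction k with
  | zero => simp [h 0, prodDown]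
  | succ k ih =>
    have hsum : ∀ j ∈ range (k + 1), M (k + 1) *ᵥ (prodDown M k (k - j) *ᵥ u j) =
        prodDown M (k + 1) (k + 1 - j) *ᵥ u j := by
      intro j hj
      rw [Nat.sub_add_comm (mem_range_succ_iff.mp hj), prodDown_succ_succ, mulVec_mulVec]
    rw [h (k + 1), ih, mulVec_add, mulVec_sum, sum_congr rfl hsum, mulVec_mulVec,
      sum_range_succ _ (k + 1), Nat.sub_self, ← prodDown_succ_succ]
    simp only [prodDown, one_mulVec, add_assoc]

lemma netState_succ_sub {n : ℕ} (φ : ℝ → ℝ) (H G W : ℕ → Matrix (Fin n) (Fin n) ℝ) (c : ℝ)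
    (x0 x0' : Fin n → ℝ) (k : ℕ) :
    netState φ H G W x0 (k + 1) - netState φ H G W x0' (k + 1) =
      (H k + c • (G k * W k)) *ᵥ (netState φ H G W x0 k - netState φ H G W x0' k) +
      G k *ᵥ ((fun a => φ a - c * a) ∘ (W k *ᵥ netState φ H G W x0 k) -
        (fun a => φ a - c * a) ∘ (W k *ᵥ netState φ H G W x0' k)) := by
  have hcomp : ∀ z : Fin n → ℝ, (fun a => φ a - c * a) ∘ z = (fun i => φ (z i)) - c • z :=
    fun _ => rfl
  rw [hcomp, hcomp]
  simp only [netState, add_mulVec, smul_mulVec, ← mulVec_mulVec, mulVec_sub, mulVec_smul]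
  module

lemma norm_eu_mulVec_netState_succ_sub_le {n : ℕ} (φ : ℝ → ℝ)
    (H G W : ℕ → Matrix (Fin n) (Fin n) ℝ) (c : ℝ) (L : Matrix (Fin n) (Fin n) ℝ)
    (x0 x0' : Fin n → ℝ) (k : ℕ) :
    ‖eu (L *ᵥ (netState φ H G W x0 (k + 1) - netState φ H G W x0' (k + 1)))‖ ≤
      specNorm (L * prodDown (fun j => H j + c • (G j * W j)) k (k + 1)) * ‖eu (x0 - x0')‖ +
      ∑ j ∈ range (k + 1),
        specNorm (L * prodDown (fun j => H j + c • (G j * W j)) k (k - j) * G j) *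
          ‖eu ((fun a => φ a - c * a) ∘ (W j *ᵥ netState φ H G W x0 j) -
            (fun a => φ a - c * a) ∘ (W j *ᵥ netState φ H G W x0' j))‖ := by
  rw [eq_prodDown_mulVec_add_sum (d := fun j => netState φ H G W x0 j - netState φ H G W x0' j)
    (netState_succ_sub φ H G W c x0 x0') k, mulVec_add, mulVec_sum, mulVec_mulVec]
  simp only [mulVec_mulVec, ← mul_assoc]
  exact norm_eu_mulVec_add_sum_le _ _ _ _ _

/-- Theorem 3 (LipLT): the recursively defined constants `m_k` are Lipschitz
constants of the maps `x_0 ↦ y_k = W_k x_k` in the ℓ₂ norm. -/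
theorem liplt_multilayer_lipschitz {n : ℕ} (φ : ℝ → ℝ) (α β : ℝ) (hαβ : α ≤ β)
    (hslope : ∀ a b : ℝ, a ≠ b → α ≤ (φ a - φ b) / (a - b) ∧ (φ a - φ b) / (a - b) ≤ β)
    (H G W : ℕ → Matrix (Fin n) (Fin n) ℝ) (m : ℕ → ℝ)
    (hm0 : m 0 = specNorm (W 0))
    (hm : ∀ k, m (k + 1) =
      specNorm (W (k + 1) * prodDown (fun j => H j + ((α + β) / 2) • (G j * W j)) k (k + 1)) +
      (β - α) / 2 * ∑ j ∈ Finset.range (k + 1),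
        specNorm (W (k + 1) *
            prodDown (fun j => H j + ((α + β) / 2) • (G j * W j)) k (k - j) * G j) * m j) :
    ∀ (k : ℕ) (x0 x0' : EuclideanSpace ℝ (Fin n)),
      ‖eu ((W k).mulVec (netState φ H G W (pl x0) k) -
           (W k).mulVec (netState φ H G W (pl x0') k))‖ ≤ m k * ‖x0 - x0'‖ := by
  have hψ := (lipschitzWith_sub_mul_of_slope_mem_Icc hslope).norm_toLp_comp_sub_comp_le (ι := Fin n)
  rw [Real.coe_toNNReal _ (by linarith)] at hψ
  intro k
  induction k using Nat.strong_induction_on with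
  | _ k ih =>
  intro x0 x0'
  rw [← mulVec_sub]
  cases k with
  | zero => exact (norm_eu_mulVec_le (W 0) _).trans_eq (by rw [hm0]; rfl)
  | succ k =>
    refine (norm_eu_mulVec_netState_succ_sub_le φ H G W ((α + β) / 2) _ _ _ k).trans ?_
    rw [hm k, add_mul, mul_assoc, sum_mul, mul_sum]
    refine add_le_add le_rfl (sum_le_sum fun j hj => ?_)
    calc _ ≤ _ * ((β - α) / 2 * ‖eu (W j *ᵥ netState φ H G W (pl x0) j -
            W j *ᵥ netState φ H G W (pl x0') j)‖) := by gcongr; exacts [specNorm_nonneg _, hψ _ _]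
      _ ≤ _ * ((β - α) / 2 * (m j * ‖x0 - x0'‖)) := by
          gcongr
          exacts [specNorm_nonneg _, ih j (mem_range.mp hj) x0 x0']
      _ = _ := by ring
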